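/- Let Γ, Γ′ ≤ I(ℝⁿ) be Bieberbach groups, let A ∈ GL(n, ℝ) and a ∈ ℝⁿ, and let f(x) := Ax + a. Suppose that conjugation by f maps Γ isomorphically onto Γ′ and preserves lengths, i.e., f Γ f⁻¹ = Γ′ and l(f γ f⁻¹) = l(γ) for every γ ∈ Γ. Then A ∈ O(n), so f is an isometry of ℝⁿ; in particular the flat manifolds Γ\ℝⁿ and Γ′\ℝⁿ are isometric. -/

import Mathlib

/-
Conjugating a translation `L_v ∈ Γ` by `f` gives the translation `L_{A v}`, and the length
of a translation is the norm of its vector, so `‖A v‖ = ‖v‖` for every `v ∈ Λ`. By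
polarization, the bilinear form `⟪A x, A y⟫ - ⟪x, y⟫` vanishes on `Λ × Λ`; since `Λ`
spans `ℝⁿ` over `ℝ`, it vanishes identically, so `A` is orthogonal.
-/

noncomputable section

open scoped InnerProductSpace

/-- Euclidean `n`-space `ℝⁿ`. -/
abbrev Euc (n : ℕ) := EuclideanSpace ℝ (Fin n)

/-- The fixed subspace `ker (B - I)` of an orthogonal transformation `B ∈ O(n)`. -/
def fixSubmodule {n : ℕ} (B : Euc n ≃ₗᵢ[ℝ] Euc n) : Submodule ℝ (Euc n) :=
  LinearMap.ker ((B.toLinearEquiv : Euc n →ₗ[ℝ] Euc n) - LinearMap.id)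

/-- `p_B`, the orthogonal projection of `ℝⁿ` onto `ker (B - I)`. -/
def pB {n : ℕ} (B : Euc n ≃ₗᵢ[ℝ] Euc n) (x : Euc n) : Euc n :=
  (Submodule.orthogonalProjectionOnto (fixSubmodule B) x : Euc n)

/-- `Λ` is a full lattice in `ℝⁿ`: the `ℤ`-span of an `ℝ`-basis of `ℝⁿ`. -/
def IsFullLattice {n : ℕ} (Λ : AddSubgroup (Euc n)) : Prop :=
  ∃ v : Module.Basis (Fin n) ℝ (Euc n),
    (Λ : Set (Euc n)) = (Submodule.span ℤ (Set.range ⇑v) : Set (Euc n))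

/-- An isometry of `ℝⁿ`, recorded by its orthogonal (rotational) part `B ∈ O(n)` and its
translational part `b ∈ ℝⁿ`; it acts by `x ↦ B x + b`, i.e. it is `B L_b`. -/
structure Iso (n : ℕ) where
  B : Euc n ≃ₗᵢ[ℝ] Euc n
  b : Euc n

namespace Iso

variable {n : ℕ}

/-- The action of the isometry `B L_b` on `ℝⁿ`: `x ↦ B x + b`. -/
def toFun (g : Iso n) : Euc n → Euc n := fun x => g.B x + g.b

/-- Composition of isometries: `(B L_b) (C L_c) = (B C) L_{B c + b}`. -/
def mul' (g h : Iso n) : Iso n := ⟨h.B.trans g.B, g.B h.b + g.b⟩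

/-- The identity isometry. -/
def one' : Iso n := ⟨LinearIsometryEquiv.refl ℝ (Euc n), 0⟩

/-- The inverse isometry: `(B L_b)⁻¹ = B⁻¹ L_{-B⁻¹ b}`. -/
def inv' (g : Iso n) : Iso n := ⟨g.B.symm, -(g.B.symm g.b)⟩

/-- The isometry group `I(ℝⁿ)`, with composition as multiplication. -/
instance : Group (Iso n) where
  mul := mul'
  one := one'
  inv := inv'
  mul_assoc a b c := by
    show mul' (mul' a b) c = mul' a (mul' b c)
    unfold mul'
    simp only [mk.injEq]
    exact ⟨by ext x; simp, by simp [add_assoc]⟩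
  one_mul a := by
    show mul' one' a = a
    cases a; simp only [mul', one', mk.injEq]
    exact ⟨by ext x; simp, by simp⟩
  mul_one a := by
    show mul' a one' = a
    cases a; simp only [mul', one', mk.injEq]
    exact ⟨by ext x; simp, by simp⟩
  inv_mul_cancel a := by
    show mul' (inv' a) a = one'
    simp only [mul', inv', one', mk.injEq]
    exact ⟨by ext x; simp, by simp⟩

/-- The translation `L_v : x ↦ x + v`, as an element of `I(ℝⁿ)`. -/
def transl (v : Euc n) : Iso n := ⟨LinearIsometryEquiv.refl ℝ (Euc n), v⟩

/-- The length `l(γ) := ‖b₊‖` of the isometry `γ = B L_b`, where `b₊ = p_B b`. -/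
def len (g : Iso n) : ℝ := ‖pB g.B g.b‖

end Iso

/-- The subgroup of pure translations inside a group `Γ ≤ I(ℝⁿ)` of isometries. -/
def translSubgroup {n : ℕ} (Γ : Subgroup (Iso n)) : Subgroup ↥Γ where
  carrier := {g | (g : Iso n).B = LinearIsometryEquiv.refl ℝ (Euc n)}
  mul_mem' := by
    intro a b ha hb
    show ((a : Iso n) * (b : Iso n)).B = _
    show ((b : Iso n)).B.trans ((a : Iso n)).B = _
    rw [Set.mem_setOf_eq] at ha hb
    rw [ha, hb]
    ext x; simp
  one_mem' := by
    show ((1 : Iso n)).B = _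
    rfl
  inv_mem' := by
    intro a ha
    show ((a : Iso n)⁻¹).B = _
    show ((a : Iso n)).B.symm = _
    rw [Set.mem_setOf_eq] at ha
    rw [ha]
    rfl

/-- `Γ` is a crystallographic group with translation lattice `Λ`:  `Λ` is a full
lattice, the translations contained in `Γ` are exactly the `L_λ` with `λ ∈ Λ`, the
translation subgroup `L_Λ` has finite index in `Γ`, and `Λ` is stable under the
rotational part of every element of `Γ`. -/
structure IsCrystallographic {n : ℕ} (Γ : Subgroup (Iso n))
    (Λ : AddSubgroup (Euc n)) : Prop where
  full : IsFullLattice Λ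
  transl_mem_iff : ∀ v : Euc n, Iso.transl v ∈ Γ ↔ v ∈ Λ
  finiteIndex : (translSubgroup Γ).FiniteIndex
  stable : ∀ g ∈ Γ, ∀ v ∈ Λ, (Iso.B g) v ∈ Λ

/-- `Γ` is a Bieberbach group: a torsion-free crystallographic group. -/
structure IsBieberbach {n : ℕ} (Γ : Subgroup (Iso n))
    (Λ : AddSubgroup (Euc n)) extends IsCrystallographic Γ Λ : Prop where
  torsionFree : ∀ g : ↥Γ, IsOfFinOrder g → g = 1

/-- The holonomy group `F = Λ\Γ`. -/
def Hol {n : ℕ} (Γ : Subgroup (Iso n)) : Type _ := ↥Γ ⧸ translSubgroup Γ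

/-- A set-theoretic representative `B L_b ∈ Γ` of a coset in `F = Λ\Γ`. -/
def Hol.rep {n : ℕ} {Γ : Subgroup (Iso n)} (c : Hol Γ) : Iso n :=
  ((Quotient.out (c : ↥Γ ⧸ translSubgroup Γ) : ↥Γ) : Iso n)

/-- The length `‖p_M t‖` of an affine bijection with linear part `M` and translational
part `t`, where `p_M` is the orthogonal projection onto `ker (M - I)`. -/
noncomputable def lenAff {n : ℕ} (M : Euc n →ₗ[ℝ] Euc n) (t : Euc n) : ℝ :=
  ‖(Submodule.orthogonalProjectionOnto (LinearMap.ker (M - LinearMap.id)) t : Euc n)‖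

theorem norm_map_eq_of_span_eq_top {E F : Type*} [NormedAddCommGroup E] [InnerProductSpace ℝ E]
    [NormedAddCommGroup F] [InnerProductSpace ℝ F] (A : E →ₗ[ℝ] F) {S : AddSubmonoid E}
    (hS : Submodule.span ℝ (S : Set E) = ⊤) (hA : ∀ v ∈ S, ‖A v‖ = ‖v‖) (x : E) :
    ‖A x‖ = ‖x‖ := by
  let Φ : E →ₗ[ℝ] E →ₗ[ℝ] ℝ := (innerₗ F).compl₁₂ A A - innerₗ E
  have hΦ : ∀ x y, Φ x y = ⟪A x, A y⟫_ℝ - ⟪x, y⟫_ℝ := fun _ _ => rfl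
  have hΦS : ∀ v ∈ S, ∀ w ∈ S, Φ v w = 0 := by
    intro v hv w hw
    have hvw := congrArg (· ^ 2) (hA _ (S.add_mem hv hw))
    simp only [map_add, norm_add_sq_real, hA v hv, hA w hw] at hvw
    rw [hΦ]
    linarith
  have hΦ0 : Φ = 0 :=
    LinearMap.ext_on hS fun v hv => LinearMap.ext_on hS fun w hw => hΦS v hv w hw
  have hxx : ‖A x‖ ^ 2 = ‖x‖ ^ 2 := by
    simpa [hΦ, real_inner_self_eq_norm_sq, sub_eq_zero] using
      congrArg (fun Ψ : E →ₗ[ℝ] E →ₗ[ℝ] ℝ => Ψ x x) hΦ0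
  exact (sq_eq_sq₀ (norm_nonneg _) (norm_nonneg _)).mp hxx

theorem lenAff_of_map_eq_self {n : ℕ} {M : Euc n →ₗ[ℝ] Euc n} {t : Euc n} (h : M t = t) :
    lenAff M t = ‖t‖ := by
  have ht : t ∈ LinearMap.ker (M - LinearMap.id) := by simp [h]
  rw [lenAff, Submodule.orthogonalProjectionOnto_mem_subspace_eq_self ⟨t, ht⟩]

theorem Iso.len_transl {n : ℕ} (v : Euc n) : (Iso.transl v).len = ‖v‖ := by
  have hv : v ∈ fixSubmodule (Iso.transl v).B := by simp [fixSubmodule, Iso.transl]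
  rw [Iso.len, pB, show (Iso.transl v).b = v from rfl,
    Submodule.orthogonalProjectionOnto_mem_subspace_eq_self ⟨v, hv⟩]

theorem lenAff_conj_transl {n : ℕ} (A : Euc n ≃ₗ[ℝ] Euc n) (a v : Euc n) :
    lenAff (A.toLinearMap ∘ₗ ((Iso.transl v).B.toLinearEquiv : Euc n →ₗ[ℝ] Euc n)
        ∘ₗ A.symm.toLinearMap)
      (a + A (Iso.transl v).b - A ((Iso.transl v).B (A.symm a))) = ‖A v‖ := by
  have ht : a + A (Iso.transl v).b - A ((Iso.transl v).B (A.symm a)) = A v := by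
    simp [Iso.transl]
  rw [ht]
  exact lenAff_of_map_eq_self (by simp [Iso.transl])

theorem IsFullLattice.span_real_eq_top {n : ℕ} {Λ : AddSubgroup (Euc n)}
    (hΛ : IsFullLattice Λ) : Submodule.span ℝ (Λ : Set (Euc n)) = ⊤ := by
  obtain ⟨v, hv⟩ := hΛ
  refine eq_top_mono (Submodule.span_mono ?_) v.span_eq
  rintro _ ⟨i, rfl⟩
  rw [hv]
  exact Submodule.subset_span ⟨i, rfl⟩

theorem isometric_of_marked_length_preserving_conjugation_general
    {n : ℕ} (Γ : Subgroup (Iso n)) (Λ : AddSubgroup (Euc n))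
    (hΓ : IsBieberbach Γ Λ)
    (A : Euc n ≃ₗ[ℝ] Euc n) (a : Euc n)
    -- conjugation by f preserves lengths: l(f γ f⁻¹) = l(γ) for all γ ∈ Γ
    (hlen : ∀ γ ∈ Γ,
      lenAff (A.toLinearMap ∘ₗ ((Iso.B γ).toLinearEquiv : Euc n →ₗ[ℝ] Euc n)
          ∘ₗ A.symm.toLinearMap)
        (a + A (Iso.b γ) - A ((Iso.B γ) (A.symm a))) = Iso.len γ) :
    -- then A ∈ O(n), so f is an isometry of ℝⁿ
    (∀ x : Euc n, ‖A x‖ = ‖x‖) ∧ Isometry (fun x : Euc n => A x + a) := by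
  have hΛ : ∀ v ∈ Λ.toAddSubmonoid, ‖A v‖ = ‖v‖ := fun v hv => by
    rw [← lenAff_conj_transl A a v, hlen _ ((hΓ.transl_mem_iff v).mpr hv), Iso.len_transl]
  have hA : ∀ x, ‖A x‖ = ‖x‖ :=
    norm_map_eq_of_span_eq_top A.toLinearMap hΓ.full.span_real_eq_top hΛ
  exact ⟨hA, (isometry_add_right a).comp (AddMonoidHomClass.isometry_of_norm A hA)⟩

theorem isometric_of_marked_length_preserving_conjugation
    {n : ℕ} (Γ Γ' : Subgroup (Iso n)) (Λ Λ' : AddSubgroup (Euc n))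
    (hΓ : IsBieberbach Γ Λ) (hΓ' : IsBieberbach Γ' Λ')
    (A : Euc n ≃ₗ[ℝ] Euc n) (a : Euc n)
    -- conjugation by f = A L_a maps Γ onto Γ' :
    -- `f γ f⁻¹` has linear part `A B A⁻¹` and translational part `a + A b − A B A⁻¹ a`
    (hconj : ∀ g : Iso n, g ∈ Γ' ↔
      ∃ γ ∈ Γ, ∀ x : Euc n, Iso.toFun g x = A (Iso.toFun γ (A.symm (x - a))) + a)
    -- conjugation by f preserves lengths: l(f γ f⁻¹) = l(γ) for all γ ∈ Γ
    (hlen : ∀ γ ∈ Γ,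
      lenAff (A.toLinearMap ∘ₗ ((Iso.B γ).toLinearEquiv : Euc n →ₗ[ℝ] Euc n)
          ∘ₗ A.symm.toLinearMap)
        (a + A (Iso.b γ) - A ((Iso.B γ) (A.symm a))) = Iso.len γ) :
    -- then A ∈ O(n), so f is an isometry of ℝⁿ
    (∀ x : Euc n, ‖A x‖ = ‖x‖) ∧ Isometry (fun x : Euc n => A x + a) :=
  isometric_of_marked_length_preserving_conjugation_general Γ Λ hΓ A a hlen
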